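/- Let α be a badly approximable irrational with partial quotients bounded by M, and let N, N' < q_L be integers whose Ostrowski expansions with respect to α agree in all digits with index < m·j, while the digits of N' with indices mj, ..., m(j+1)-1 are all zero. Then for all 0 ≤ i ≤ mj-1 and all admissible s, the perturbations satisfy |ε_{i,s}(N) - ε_{i,s}(N')| ≤ C_M · (1/√2)^{mj - i}, where C_M depends only on M. -/

import Mathlib

open Finset

/-- Ostrowski digit conditions for `N` with respect to partial quotients `a`
and convergent denominators `q`, for expansions of length `L`. -/
def IsOstrowski (a q : ℕ → ℕ) (L N : ℕ) (b : ℕ → ℕ) : Prop :=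
  (N = ∑ i ∈ range L, b i * q i) ∧
  b 0 < a 1 ∧
  (∀ i, 1 ≤ i → b i ≤ a (i + 1)) ∧
  (∀ i, 1 ≤ i → b i = a (i + 1) → b (i - 1) = 0) ∧
  (∀ i, L ≤ i → b i = 0)

/-- numerators of convergents -/
def pconv (a : ℕ → ℕ) : ℕ → ℤ
  | 0 => 0
  | 1 => 1
  | n + 2 => a (n + 2) * pconv a (n + 1) + pconv a n

lemma round_nearest (x : ℝ) (n : ℤ) : |x - round x| ≤ |x - n| := by
  rcases eq_or_ne n (round x) with h | h
  · rw [h]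
  · have h1 : (1 : ℝ) ≤ |(round x : ℝ) - n| := by
      have : round x - n ≠ 0 := sub_ne_zero.mpr (Ne.symm h)
      exact_mod_cast Int.one_le_abs this
    have h2 : |x - round x| ≤ 1 / 2 := abs_sub_round x
    have h3 : |(round x : ℝ) - n| ≤ |x - (round x : ℝ)| + |x - n| := by
      calc |(round x : ℝ) - n| = |((round x : ℝ) - x) + (x - n)| := by ring_nf
        _ ≤ |(round x : ℝ) - x| + |x - n| := abs_add_le _ _
        _ = |x - (round x : ℝ)| + |x - n| := by rw [abs_sub_comm]
    linarith


set_option maxHeartbeats 1000000 in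
/-- For a badly approximable α (all partial quotients ≤ M) there
is a constant `C = C(M)` such that: if `N, N' < q L` have Ostrowski expansions
agreeing in all digits of index `< m*j`, and the digits of `N'` with indices
`m*j, …, m*(j+1)-1` all vanish, then for all `i < m*j` and admissible `s`,
`|ε_{i,s}(N) - ε_{i,s}(N')| ≤ C * (1/√2)^(m*j - i)`. -/
theorem stmt11 (M : ℕ) (hM : 1 ≤ M) :
    ∃ C : ℝ, 0 < C ∧
      ∀ (α : ℝ), Irrational α → α ∈ Set.Ioo (0 : ℝ) 1 →
      ∀ (t : ℕ → ℝ) (a q : ℕ → ℕ) (δ : ℕ → ℝ),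
        t 1 = 1 / α →
        (∀ i, 1 ≤ i → (a i : ℤ) = ⌊t i⌋) →
        (∀ i, 1 ≤ i → t (i + 1) = 1 / (t i - (a i : ℝ))) →
        q 0 = 1 → q 1 = a 1 →
        (∀ i, 1 ≤ i → q (i + 1) = a (i + 1) * q i + q (i - 1)) →
        (∀ i, δ i = |(q i : ℝ) * α - ((round ((q i : ℝ) * α) : ℤ) : ℝ)|) →
        (∀ i, 1 ≤ i → a i ≤ M) →
        ∀ (L m j N N' : ℕ) (b b' : ℕ → ℕ),
          1 ≤ m → m * (j + 1) ≤ L →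
          N < q L → N' < q L →
          IsOstrowski a q L N b → IsOstrowski a q L N' b' →
          (∀ i, i < m * j → b' i = b i) →
          (∀ i, m * j ≤ i → i < m * (j + 1) → b' i = 0) →
          ∀ i s : ℕ, i < m * j → s < b i →
            |(q i : ℝ) * ((s : ℝ) * δ i +
                  ∑ j' ∈ Icc 1 (L - 1 - i), (-1 : ℝ) ^ j' * (b (i + j') : ℝ) * δ (i + j'))
              - (q i : ℝ) * ((s : ℝ) * δ i +
                  ∑ j' ∈ Icc 1 (L - 1 - i), (-1 : ℝ) ^ j' * (b' (i + j') : ℝ) * δ (i + j'))|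
              ≤ C * (1 / Real.sqrt 2) ^ (m * j - i) := by
  -- numeric facts about √2
  have hs2 : Real.sqrt 2 ^ 2 = 2 := Real.sq_sqrt (by norm_num)
  have hs0 : (0:ℝ) < Real.sqrt 2 := Real.sqrt_pos.mpr (by norm_num)
  have hs1 : (1:ℝ) < Real.sqrt 2 := by nlinarith
  set r : ℝ := 1 / Real.sqrt 2 with hr_def
  have hr0 : 0 < r := by positivity
  have hr1 : r < 1 := by rw [hr_def, div_lt_one hs0]; exact hs1
  have hrsq : r ^ 2 = 1 / 2 := by
    rw [hr_def, div_pow, hs2, one_pow]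
  refine ⟨8 * M, by positivity, ?_⟩
  intro α hαirr hαIoo t a q δ ht1 hta htrec hq0 hq1 hqrec hδ haM
  intro L m j N N' b b' hm hmjL hNL hN'L hb hb' hagree hzero i s hi hs
  obtain ⟨hα0, hα1⟩ := hαIoo
  -- facts about t
  have tfact : ∀ i, 1 ≤ i → Irrational (t i) ∧ 1 < t i := by
    intro i hi
    induction i, hi using Nat.le_induction with
    | base =>
      rw [ht1]
      exact ⟨by rw [one_div]; exact hαirr.inv, one_lt_one_div hα0 hα1⟩
    | succ n hn ih =>
      obtain ⟨hirr, hlt⟩ := ih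
      have hfloor : (a n : ℝ) = (⌊t n⌋ : ℤ) := by exact_mod_cast hta n hn
      have hfr : 0 < t n - (a n : ℝ) := by
        rw [hfloor]
        rcases lt_or_eq_of_le (Int.floor_le (t n)) with h | h
        · linarith
        · exact absurd h.symm (hirr.ne_int _)
      have hfr1 : t n - (a n : ℝ) < 1 := by
        rw [hfloor]; have := Int.lt_floor_add_one (t n); linarith
      have hirr' : Irrational (t n - (a n : ℝ)) := by
        rw [hfloor]; exact hirr.sub_intCast _
      constructor
      · rw [htrec n hn]
        rw [one_div]; exact hirr'.inv
      · rw [htrec n hn]; exact one_lt_one_div hfr hfr1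
  have tpos : ∀ i, 1 ≤ i → 0 < t i := fun i hi => lt_trans one_pos (tfact i hi).2
  have afact : ∀ i, 1 ≤ i → 1 ≤ a i := by
    intro i hi
    have h := hta i hi
    have h1 : (1:ℤ) ≤ ⌊t i⌋ := Int.le_floor.mpr (by exact_mod_cast (tfact i hi).2.le)
    have : (1:ℤ) ≤ (a i : ℤ) := by rw [h]; exact h1
    exact_mod_cast this
  -- fractional part identity: t i - a i = 1 / t (i+1), positive
  have hfrpos : ∀ i, 1 ≤ i → 0 < t i - (a i : ℝ) := by
    intro i hi
    have hfloor : (a i : ℝ) = (⌊t i⌋ : ℤ) := by exact_mod_cast hta i hi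
    rw [hfloor]
    rcases lt_or_eq_of_le (Int.floor_le (t i)) with h | h
    · linarith
    · exact absurd h.symm ((tfact i hi).1.ne_int _)
  have hfr_eq : ∀ i, 1 ≤ i → t i - (a i : ℝ) = 1 / t (i + 1) := by
    intro i hi
    rw [htrec i hi, one_div_one_div]
  -- D and E
  set D : ℕ → ℝ := fun k => (q k : ℝ) * α - (pconv a k : ℝ) with hD_def
  set E : ℕ → ℝ := fun k => (-1 : ℝ) ^ k * D k with hE_def
  have hαne : α ≠ 0 := ne_of_gt hα0
  have hDsucc : ∀ k, D (k + 1) = -(D k) / t (k + 2) := by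
    intro k
    induction k with
    | zero =>
      have hD0 : D 0 = α := by simp [hD_def, hq0, pconv]
      have hD1 : D 1 = (a 1 : ℝ) * α - 1 := by simp [hD_def, hq1, pconv]
      have ht2 : t 2 = 1 / (t 1 - (a 1 : ℝ)) := htrec 1 le_rfl
      have hfr : 0 < t 1 - (a 1 : ℝ) := hfrpos 1 le_rfl
      rw [hD1, hD0, ht2, one_div, div_inv_eq_mul]
      have hαt : α * t 1 = 1 := by rw [ht1]; field_simp
      linear_combination hαt
    | succ n ih =>
      have hqn2 : q (n + 2) = a (n + 2) * q (n + 1) + q n := by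
        have := hqrec (n + 1) (by omega)
        simpa using this
      have hq2 : (q (n + 2) : ℝ) = (a (n + 2) : ℝ) * (q (n + 1) : ℝ) + (q n : ℝ) := by
        rw [hqn2]; push_cast; ring
      have hp2 : (pconv a (n + 2) : ℝ) = (a (n + 2) : ℝ) * (pconv a (n + 1) : ℝ) + (pconv a n : ℝ) := by
        show ((pconv a (n+2) : ℤ) : ℝ) = _
        rw [pconv]
        push_cast
        ring
      have hDrec : D (n + 2) = (a (n + 2) : ℝ) * D (n + 1) + D n := by
        simp only [hD_def, hq2, hp2]; ring
      have htpos : 0 < t (n + 2) := tpos (n + 2) (by omega)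
      have hDn : D n = -(t (n + 2)) * D (n + 1) := by
        rw [ih]; field_simp
      have hfr : t (n + 2) - (a (n + 2) : ℝ) = 1 / t (n + 3) := hfr_eq (n + 2) (by omega)
      have htpos3 : 0 < t (n + 3) := tpos (n + 3) (by omega)
      show D (n + 2) = -(D (n + 1)) / t (n + 3)
      rw [hDrec, hDn]
      rw [eq_div_iff (ne_of_gt htpos3)]
      have hkey : t (n + 3) * (t (n + 2) - (a (n + 2) : ℝ)) = 1 := by
        rw [hfr]; field_simp
      linear_combination (-(D (n+1))) * hkey
  have hEsucc : ∀ k, E (k + 1) = E k / t (k + 2) := by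
    intro k
    simp only [hE_def, hDsucc k, pow_succ]
    ring
  have hE0 : E 0 = α := by simp [hE_def, hD_def, hq0, pconv]
  have hEpos : ∀ k, 0 < E k := by
    intro k
    induction k with
    | zero => rw [hE0]; exact hα0
    | succ n ih =>
      rw [hEsucc n]
      exact div_pos ih (tpos (n + 2) (by omega))
  have hEmono : ∀ k, E (k + 1) ≤ E k := by
    intro k
    rw [hEsucc k]
    have h1 : 1 < t (k + 2) := (tfact (k + 2) (by omega)).2
    rw [div_le_iff₀ (by linarith)]
    nlinarith [hEpos k]
  have hEhalf : ∀ k, E (k + 2) ≤ E k / 2 := by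
    intro k
    have h1 : 1 < t (k + 2) := (tfact (k + 2) (by omega)).2
    have h2 : 1 < t (k + 3) := (tfact (k + 3) (by omega)).2
    have ha2 : (1 : ℝ) ≤ (a (k + 2) : ℝ) := by exact_mod_cast afact (k + 2) (by omega)
    have hfr : t (k + 2) - (a (k + 2) : ℝ) = 1 / t (k + 3) := hfr_eq (k + 2) (by omega)
    have hprod : 2 ≤ t (k + 2) * t (k + 3) := by
      have : t (k + 2) * t (k + 3) = (a (k + 2) : ℝ) * t (k + 3) + 1 := by
        have h3 : t (k + 3) * (t (k + 2) - (a (k + 2) : ℝ)) = 1 := by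
          rw [hfr]; field_simp
        nlinarith [h3]
      nlinarith
    have htp : 0 < t (k + 2) * t (k + 3) := mul_pos (by linarith) (by linarith)
    have heq : E (k + 2) = E k / (t (k + 2) * t (k + 3)) := by
      rw [hEsucc (k + 1), hEsucc k, div_div]
    rw [heq]
    have hEk := hEpos k
    rw [div_le_div_iff₀ htp (by norm_num : (0:ℝ) < 2)]
    nlinarith
  -- invariant: q (k+1) * E k + q k * E (k+1) = 1
  have hInv : ∀ k, (q (k + 1) : ℝ) * E k + (q k : ℝ) * E (k + 1) = 1 := by
    intro k
    induction k with
    | zero =>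
      have hE1 : E 1 = 1 - (a 1 : ℝ) * α := by
        simp only [hE_def, hD_def, hq1]
        show (-1:ℝ)^1 * ((a 1 : ℝ) * α - ((pconv a 1 : ℤ):ℝ)) = _
        rw [pconv]
        push_cast; ring
      rw [hE0, hE1, hq0, hq1]
      push_cast; ring
    | succ n ih =>
      have hqn2 : q (n + 2) = a (n + 2) * q (n + 1) + q n := by
        have := hqrec (n + 1) (by omega)
        simpa using this
      have hq2 : (q (n + 2) : ℝ) = (a (n + 2) : ℝ) * (q (n + 1) : ℝ) + (q n : ℝ) := by
        rw [hqn2]; push_cast; ring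
      have hE2 : E (n + 2) = E n - (a (n + 2) : ℝ) * E (n + 1) := by
        have hp2 : (pconv a (n + 2) : ℝ) = (a (n + 2) : ℝ) * (pconv a (n + 1) : ℝ) + (pconv a n : ℝ) := by
          show ((pconv a (n+2) : ℤ) : ℝ) = _
          rw [pconv]; push_cast; ring
        simp only [hE_def, hD_def, hq2, hp2]
        ring
      rw [hq2, hE2]
      nlinarith [ih]
  -- q is monotone and ≥ 1
  have hq_ge1 : ∀ k, 1 ≤ q k := by
    intro k
    induction k using Nat.twoStepInduction with
    | zero => omega
    | one => rw [hq1]; exact afact 1 le_rfl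
    | more n ih ih2 =>
      rw [hqrec (n + 1) (by omega)]
      have h1 := afact (n + 2) (by omega)
      have h2 : 1 ≤ a (n+2) * q (n+1) :=
        Nat.one_le_iff_ne_zero.mpr (Nat.mul_ne_zero (by omega) (by omega))
      exact le_trans h2 (Nat.le_add_right _ _)
  have hq_mono : ∀ k, q k ≤ q (k + 1) := by
    intro k
    match k with
    | 0 => rw [hq0, hq1]; exact afact 1 le_rfl
    | Nat.succ n =>
      rw [hqrec (n + 1) (by omega)]
      have h1 := afact (n + 2) (by omega)
      have h2 := hq_ge1 (n + 1)
      calc q (n+1) ≤ a (n+2) * q (n+1) := Nat.le_mul_of_pos_left _ (by omega)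
        _ ≤ a (n+2) * q (n+1) + q n := Nat.le_add_right _ _
  have hqE : ∀ k, (q k : ℝ) * E k ≤ 1 := by
    intro k
    have h1 := hInv k
    have h2 : (q k : ℝ) ≤ (q (k + 1) : ℝ) := by exact_mod_cast hq_mono k
    have h3 := hEpos k
    have h4 := hEpos (k + 1)
    have h5 : (0:ℝ) ≤ (q k : ℝ) := Nat.cast_nonneg _
    nlinarith
  -- δ k ≤ E k
  have hδE : ∀ k, δ k ≤ E k := by
    intro k
    rw [hδ k]
    have h1 : |((q k : ℝ)) * α - (pconv a k : ℝ)| = E k := by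
      have : E k = |D k| := by
        rcases Nat.even_or_odd k with he | ho
        · rw [abs_of_pos]
          · simp [hE_def, he.neg_one_pow]
          · have := hEpos k
            simp only [hE_def, he.neg_one_pow, one_mul] at this
            exact this
        · rw [abs_of_neg]
          · simp [hE_def, ho.neg_one_pow]
          · have := hEpos k
            simp only [hE_def, ho.neg_one_pow, neg_one_mul] at this
            linarith
      rw [this]
    rw [← h1]
    exact round_nearest _ _
  -- decay of E
  have hEdecay : ∀ i d, E (i + d) ≤ E i * (1/2 : ℝ) ^ (d / 2) := by
    intro i d
    induction d using Nat.twoStepInduction with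
    | zero => simp
    | one =>
      simpa using (hEmono i)
    | more n ih _ =>
      have h1 : i + (n + 2) = (i + n) + 2 := by ring
      have h2 := hEhalf (i + n)
      have h3 : (n + 2) / 2 = n / 2 + 1 := by omega
      rw [h1, h3, pow_succ]
      calc E (i + n + 2) ≤ E (i + n) / 2 := h2
        _ ≤ (E i * (1/2:ℝ) ^ (n / 2)) / 2 := by linarith
        _ = E i * ((1/2:ℝ) ^ (n / 2) * (1/2)) := by ring
  -- final assembly
  set T := L - 1 - i with hT_def
  set k0 := m * j - i with hk0_def
  have hk01 : 1 ≤ k0 := by omega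
  have hqnn : (0:ℝ) ≤ (q i : ℝ) := Nat.cast_nonneg _
  have hδnn : ∀ k, 0 ≤ δ k := fun k => by rw [hδ k]; exact abs_nonneg _
  obtain ⟨-, -, hble, -, -⟩ := hb
  obtain ⟨-, -, hb'le, -, -⟩ := hb'
  have hbM : ∀ l, 1 ≤ l → (b l : ℝ) ≤ (M:ℝ) := by
    intro l hl; exact_mod_cast le_trans (hble l hl) (haM (l+1) (by omega))
  have hb'M : ∀ l, 1 ≤ l → (b' l : ℝ) ≤ (M:ℝ) := by
    intro l hl; exact_mod_cast le_trans (hb'le l hl) (haM (l+1) (by omega))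
  set f : ℕ → ℝ := fun x => (-1:ℝ)^x * ((b (i+x):ℝ) - (b' (i+x):ℝ)) * δ (i+x) with hf_def
  have hdiff : (q i:ℝ) * ((s:ℝ) * δ i + ∑ j' ∈ Icc 1 T, (-1:ℝ)^j' * (b (i+j'):ℝ) * δ (i+j'))
      - (q i:ℝ) * ((s:ℝ) * δ i + ∑ j' ∈ Icc 1 T, (-1:ℝ)^j' * (b' (i+j'):ℝ) * δ (i+j'))
      = (q i:ℝ) * ∑ j' ∈ Icc 1 T, f j' := by
    rw [← mul_sub, add_sub_add_left_eq_sub, ← Finset.sum_sub_distrib]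
    congr 1
    apply Finset.sum_congr rfl
    intro x hx
    simp only [hf_def]
    ring
  rw [hdiff]
  have hsum_eq : ∑ j' ∈ Icc 1 T, f j' = ∑ j' ∈ Icc k0 T, f j' := by
    apply (Finset.sum_subset (Finset.Icc_subset_Icc hk01 le_rfl) ?_).symm
    intro x hx hnx
    simp only [Finset.mem_Icc] at hx hnx
    have hxlt : i + x < m * j := by omega
    simp only [hf_def, hagree (i + x) hxlt]
    ring
  rw [hsum_eq]
  have hrr : Real.sqrt 2 * r = 1 := by rw [hr_def]; field_simp
  have hterm : ∀ x ∈ Icc k0 T, |f x| ≤ (M:ℝ) * (E i * (Real.sqrt 2 * r ^ x)) := by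
    intro x hx
    simp only [Finset.mem_Icc] at hx
    have hx1 : 1 ≤ x := le_trans hk01 hx.1
    have hix : 1 ≤ i + x := by omega
    have h1 : |f x| ≤ (M:ℝ) * δ (i + x) := by
      simp only [hf_def]
      rw [abs_mul, abs_mul, abs_pow, abs_neg, abs_one, one_pow, one_mul,
        abs_of_nonneg (hδnn (i + x))]
      have hbb : |(b (i+x):ℝ) - (b' (i+x):ℝ)| ≤ (M:ℝ) := by
        rw [abs_le]
        constructor
        · have h5 := hb'M (i+x) hix
          have h0 : (0:ℝ) ≤ (b (i+x):ℝ) := Nat.cast_nonneg _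
          linarith
        · have h5 := hbM (i+x) hix
          have h0 : (0:ℝ) ≤ (b' (i+x):ℝ) := Nat.cast_nonneg _
          linarith
      exact mul_le_mul_of_nonneg_right hbb (hδnn _)
    refine le_trans h1 ?_
    have h2 : δ (i + x) ≤ E (i + x) := hδE (i + x)
    have h3 : E (i + x) ≤ E i * (1/2:ℝ) ^ (x / 2) := hEdecay i x
    have h4 : (1/2:ℝ) ^ (x / 2) ≤ Real.sqrt 2 * r ^ x := by
      have e1 : (1/2:ℝ) ^ (x / 2) = r ^ (2 * (x / 2)) := by
        rw [pow_mul, hrsq]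
      rw [e1]
      have e2 : r ^ (2 * (x / 2)) ≤ r ^ (x - 1) :=
        pow_le_pow_of_le_one (le_of_lt hr0) (le_of_lt hr1) (by omega)
      have hx' : x - 1 + 1 = x := by omega
      have e3 : Real.sqrt 2 * r ^ x = r ^ (x - 1) := by
        calc Real.sqrt 2 * r ^ x = Real.sqrt 2 * (r ^ (x-1) * r) := by
              rw [← pow_succ, hx']
          _ = (Real.sqrt 2 * r) * r ^ (x-1) := by ring
          _ = r ^ (x-1) := by rw [hrr, one_mul]
      rw [e3]; exact e2
    have hEi : 0 < E i := hEpos i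
    have hMnn : (0:ℝ) ≤ (M:ℝ) := Nat.cast_nonneg _
    calc (M:ℝ) * δ (i+x) ≤ (M:ℝ) * E (i+x) :=
          mul_le_mul_of_nonneg_left h2 hMnn
      _ ≤ (M:ℝ) * (E i * (1/2:ℝ) ^ (x/2)) := mul_le_mul_of_nonneg_left h3 hMnn
      _ ≤ (M:ℝ) * (E i * (Real.sqrt 2 * r ^ x)) := by
          apply mul_le_mul_of_nonneg_left _ hMnn
          exact mul_le_mul_of_nonneg_left h4 (le_of_lt hEi)
  have habs : |(q i:ℝ) * ∑ j' ∈ Icc k0 T, f j'|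
      ≤ (q i:ℝ) * ∑ j' ∈ Icc k0 T, (M:ℝ) * (E i * (Real.sqrt 2 * r ^ j')) := by
    rw [abs_mul, abs_of_nonneg hqnn]
    apply mul_le_mul_of_nonneg_left _ hqnn
    exact le_trans (Finset.abs_sum_le_sum_abs _ _) (Finset.sum_le_sum hterm)
  refine le_trans habs ?_
  have hfac : ∑ j' ∈ Icc k0 T, (M:ℝ) * (E i * (Real.sqrt 2 * r ^ j'))
      = (M:ℝ) * E i * Real.sqrt 2 * ∑ j' ∈ Icc k0 T, r ^ j' := by
    rw [Finset.mul_sum]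
    apply Finset.sum_congr rfl
    intro x _
    ring
  rw [hfac]
  have h1r : 0 < 1 - r := by linarith
  have hgeom : ∑ x ∈ Icc k0 T, r ^ x ≤ r ^ k0 * (1 / (1 - r)) := by
    rw [← Finset.Ico_add_one_right_eq_Icc]
    rcases le_or_gt k0 (T + 1) with h | h
    · rw [Finset.sum_Ico_eq_sum_range]
      have e : ∀ u ∈ range (T + 1 - k0), r ^ (k0 + u) = r ^ k0 * r ^ u := by
        intro u _; rw [pow_add]
      rw [Finset.sum_congr rfl e, ← Finset.mul_sum]
      apply mul_le_mul_of_nonneg_left _ (le_of_lt (pow_pos hr0 k0))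
      have hgm : (∑ u ∈ range (T + 1 - k0), r ^ u) * (r - 1) = r ^ (T + 1 - k0) - 1 :=
        geom_sum_mul r (T + 1 - k0)
      have hgm' : (∑ u ∈ range (T + 1 - k0), r ^ u) * (1 - r) = 1 - r ^ (T + 1 - k0) := by
        linear_combination -hgm
      have hrn : 0 ≤ r ^ (T + 1 - k0) := le_of_lt (pow_pos hr0 _)
      rw [le_div_iff₀ h1r]
      linarith
    · rw [Finset.Ico_eq_empty (by omega)]
      simp only [Finset.sum_empty]
      positivity
  have hEi : 0 < E i := hEpos i
  have hMnn : (0:ℝ) ≤ (M:ℝ) := Nat.cast_nonneg _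
  have hkey : Real.sqrt 2 * (1 / (1 - r)) ≤ 8 := by
    rw [mul_one_div, div_le_iff₀ h1r]
    nlinarith [hs2, hs1, hrr, hr0]
  calc (q i:ℝ) * ((M:ℝ) * E i * Real.sqrt 2 * ∑ j' ∈ Icc k0 T, r ^ j')
      ≤ (q i:ℝ) * ((M:ℝ) * E i * Real.sqrt 2 * (r ^ k0 * (1 / (1 - r)))) := by
        apply mul_le_mul_of_nonneg_left _ hqnn
        apply mul_le_mul_of_nonneg_left hgeom
        positivity
    _ = ((q i:ℝ) * E i) * ((M:ℝ) * (Real.sqrt 2 * (1 / (1 - r))) * r ^ k0) := by ring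
    _ ≤ 1 * ((M:ℝ) * (Real.sqrt 2 * (1 / (1 - r))) * r ^ k0) := by
        apply mul_le_mul_of_nonneg_right (hqE i)
        positivity
    _ = (M:ℝ) * (Real.sqrt 2 * (1 / (1 - r))) * r ^ k0 := by ring
    _ ≤ (M:ℝ) * 8 * r ^ k0 := by
        apply mul_le_mul_of_nonneg_right _ (le_of_lt (pow_pos hr0 k0))
        exact mul_le_mul_of_nonneg_left hkey hMnn
    _ = 8 * (M:ℝ) * r ^ k0 := by ring
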